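/- Sliding is an invariant property along trajectories: let v₀ > 0, let u : ℝ² → ℝ² be continuously differentiable, and let (r, θ) : I → ℝ² × ℝ be a differentiable solution of the front-element dynamics on an open interval I. If at some time t₀ ∈ I the point (r(t₀), θ(t₀)) is sliding, i.e. (u(r(t₀)) + v₀ n̂(θ(t₀))) · n̂(θ(t₀)) = 0, then (r(t), θ(t)) is sliding for every t ∈ I. -/

import Mathlib

noncomputable section

open Real Polynomial

/-- Points in the plane, with the Euclidean norm. -/
abbrev Pt : Type := EuclideanSpace ℝ (Fin 2)

/-- Build a point of the plane from two coordinates. -/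
def vec2 (a b : ℝ) : Pt := (WithLp.equiv 2 (Fin 2 → ℝ)).symm ![a, b]

/-- Front tangent direction ĝ(θ) = (cos θ, sin θ). -/
def ghat (θ : ℝ) : Pt := vec2 (Real.cos θ) (Real.sin θ)

/-- Front normal (burning) direction n̂(θ) = (sin θ, −cos θ). -/
def nhat (θ : ℝ) : Pt := vec2 (Real.sin θ) (-(Real.cos θ))

/-- Euclidean dot product on the plane. -/
def dot (v w : Pt) : ℝ := v 0 * w 0 + v 1 * w 1

/-- The Jacobian matrix Du(r) of a planar vector field. -/
def jacOf (u : Pt → Pt) (r : Pt) : Matrix (Fin 2) (Fin 2) ℝ :=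
  fun i j => fderiv ℝ u r (EuclideanSpace.single j 1) i

/-- Action of a 2×2 matrix on a point of the plane. -/
def mulVec2 (M : Matrix (Fin 2) (Fin 2) ℝ) (v : Pt) : Pt :=
  vec2 (M 0 0 * v 0 + M 0 1 * v 1) (M 1 0 * v 0 + M 1 1 * v 1)

/-- The three-dimensional front-element vector field
    F(r, θ) = (u(r) + v₀ n̂(θ), −n̂(θ)·(Du(r) ĝ(θ))). -/
def frontField (v₀ : ℝ) (u : Pt → Pt) (q : Pt × ℝ) : Pt × ℝ :=
  (u q.1 + v₀ • nhat q.2, -(dot (nhat q.2) (mulVec2 (jacOf u q.1) (ghat q.2))))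

/-- The standard basis of ℝ² × ℝ ≃ ℝ³. -/
def basis3 : Fin 3 → Pt × ℝ :=
  ![(EuclideanSpace.single 0 1, 0), (EuclideanSpace.single 1 1, 0), ((0 : Pt), 1)]

/-- Components of a vector in ℝ² × ℝ ≃ ℝ³. -/
def comp3 (p : Pt × ℝ) : Fin 3 → ℝ := ![p.1 0, p.1 1, p.2]

/-- The 3×3 Jacobian matrix of the front-element field at a point of ℝ² × ℝ. -/
def jac3 (v₀ : ℝ) (u : Pt → Pt) (q : Pt × ℝ) : Matrix (Fin 3) (Fin 3) ℝ :=
  fun i j => comp3 (fderiv ℝ (frontField v₀ u) q (basis3 j)) i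

/-- Second partial derivative ∂ⱼ∂ₖuᵢ(r). -/
def d2 (u : Pt → Pt) (r : Pt) (i j k : Fin 2) : ℝ :=
  fderiv ℝ (fun x => fderiv ℝ u x (EuclideanSpace.single k 1) i) r (EuclideanSpace.single j 1)

/-- Divergence-free: ∂₁u₁ + ∂₂u₂ = 0 everywhere. -/
def divFree (u : Pt → Pt) : Prop := ∀ r : Pt, jacOf u r 0 0 + jacOf u r 1 1 = 0

/-- Rotation of a planar vector by +π/2. -/
def perp (v : Pt) : Pt := vec2 (-(v 1)) (v 0)

/-- The velocity field generated by a stream function: u = (∂Ψ/∂y, −∂Ψ/∂x). -/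
def uOf (Ψ : Pt → ℝ) (x : Pt) : Pt :=
  vec2 (fderiv ℝ Ψ x (EuclideanSpace.single 1 1)) (-(fderiv ℝ Ψ x (EuclideanSpace.single 0 1)))

/-- Polar angle of a point of the plane. -/
def angOf (x : Pt) : ℝ := Complex.arg ⟨x 0, x 1⟩

/-! The normal speed `f = (u(r) + v₀ n̂(θ)) · n̂(θ)` of a front element obeys the scalar linear
equation `ḟ = (n̂ · Du n̂) f` along every trajectory: decomposing the velocity in the frame
`(ĝ, n̂)` as `(u · ĝ) ĝ + f n̂`, the tangential part of `Du ṙ · n̂` is exactly cancelled by the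
rotation `θ̇ = −n̂ · Du ĝ` of the normal. Hence `f · exp (−∫ n̂ · Du n̂)` is constant, and `f`
vanishes on the whole interval once it vanishes at one time. -/

open Set

theorem ContinuousOn.exists_hasDerivAt_Ioo {c : ℝ → ℝ} {a b t₀ : ℝ}
    (hc : ContinuousOn c (Ioo a b)) (ht₀ : t₀ ∈ Ioo a b) :
    ∃ C : ℝ → ℝ, ∀ t ∈ Ioo a b, HasDerivAt C (c t) t := by
  refine ⟨fun t => ∫ s in t₀..t, c s, fun t ht => ?_⟩
  exact intervalIntegral.integral_hasDerivAt_right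
    (hc.mono (ordConnected_Ioo.uIcc_subset ht₀ ht)).intervalIntegrable
    (hc.stronglyMeasurableAtFilter isOpen_Ioo t ht) (hc.continuousAt (isOpen_Ioo.mem_nhds ht))

theorem eqOn_zero_of_hasDerivAt_smul_self {E : Type*} [NormedAddCommGroup E] [NormedSpace ℝ E]
    {f : ℝ → E} {c : ℝ → ℝ} {a b t₀ : ℝ} (hc : ContinuousOn c (Ioo a b))
    (hf : ∀ t ∈ Ioo a b, HasDerivAt f (c t • f t) t) (ht₀ : t₀ ∈ Ioo a b) (hf₀ : f t₀ = 0) :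
    EqOn f 0 (Ioo a b) := by
  obtain ⟨C, hC⟩ := hc.exists_hasDerivAt_Ioo ht₀
  have hg : ∀ t ∈ Ioo a b, HasDerivAt (fun s => exp (-C s) • f s) 0 t := by
    intro t ht
    have h : HasDerivAt (fun s => exp (-C s) • f s)
        (exp (-C t) • c t • f t + (exp (-C t) * -c t) • f t) t :=
      ((hC t ht).neg.exp).smul (hf t ht)
    rwa [smul_smul, ← add_smul, mul_neg, add_neg_cancel, zero_smul] at h
  intro t ht
  have hconst : exp (-C t) • f t = exp (-C t₀) • f t₀ :=
    isOpen_Ioo.is_const_of_deriv_eq_zero isPreconnected_Ioo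
      (fun s hs => (hg s hs).differentiableAt.differentiableWithinAt)
      (fun s hs => (hg s hs).deriv) ht ht₀
  simpa [hf₀, (exp_pos _).ne'] using hconst

theorem dot_eq_inner (v w : Pt) : dot v w = inner ℝ v w := by
  simp [dot, PiLp.inner_apply, Fin.sum_univ_two, mul_comm]

theorem dot_comm (v w : Pt) : dot v w = dot w v := by
  simp only [dot_eq_inner, real_inner_comm]

theorem dot_add_left (v w z : Pt) : dot (v + w) z = dot v z + dot w z := by
  simp only [dot_eq_inner, inner_add_left]

theorem dot_smul_left (c : ℝ) (v w : Pt) : dot (c • v) w = c * dot v w := by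
  simp only [dot_eq_inner, real_inner_smul_left]

theorem dot_smul_right (c : ℝ) (v w : Pt) : dot v (c • w) = c * dot v w := by
  simp only [dot_eq_inner, real_inner_smul_right]

theorem HasDerivAt.dot {f g : ℝ → Pt} {f' g' : Pt} {t : ℝ} (hf : HasDerivAt f f' t)
    (hg : HasDerivAt g g' t) :
    HasDerivAt (fun s => dot (f s) (g s)) (dot f' (g t) + dot (f t) g') t := by
  simpa only [dot_eq_inner, add_comm] using hf.inner ℝ hg

theorem mulVec2_jacOf (u : Pt → Pt) (x v : Pt) : mulVec2 (jacOf u x) v = fderiv ℝ u x v := by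
  have hv : v = v 0 • EuclideanSpace.single 0 1 + v 1 • EuclideanSpace.single 1 1 := by
    ext i; fin_cases i <;> simp
  ext i
  conv_rhs => rw [hv]
  fin_cases i <;> simp [mulVec2, jacOf, vec2, mul_comm]

theorem hasDerivAt_nhat (θ : ℝ) : HasDerivAt nhat (ghat θ) θ := by
  have h : HasDerivAt (fun θ => ![sin θ, -cos θ]) ![cos θ, sin θ] θ := by
    refine hasDerivAt_pi.2 fun i => ?_
    fin_cases i
    · simpa using hasDerivAt_sin θ
    · simpa using (hasDerivAt_cos θ).fun_neg
  exact (PiLp.continuousLinearEquiv 2 ℝ (fun _ : Fin 2 => ℝ)).symm.hasFDerivAt.comp_hasDerivAt θ h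

theorem continuous_nhat : Continuous nhat :=
  continuous_iff_continuousAt.2 fun θ => (hasDerivAt_nhat θ).continuousAt

theorem dot_ghat_nhat (θ : ℝ) : dot (ghat θ) (nhat θ) = 0 := by
  simp only [dot, ghat, nhat, vec2, WithLp.equiv_symm_apply, Matrix.cons_val_zero,
    Matrix.cons_val_one, Matrix.cons_val_fin_one]
  ring

theorem dot_nhat_ghat (θ : ℝ) : dot (nhat θ) (ghat θ) = 0 := by
  rw [dot_comm, dot_ghat_nhat]

theorem eq_dot_ghat_smul_add_dot_nhat_smul (v : Pt) (θ : ℝ) :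
    v = dot v (ghat θ) • ghat θ + dot v (nhat θ) • nhat θ := by
  have h := sin_sq_add_cos_sq θ
  ext i
  fin_cases i <;> simp only [Fin.zero_eta, Fin.mk_one, dot, ghat, nhat, vec2,
    WithLp.equiv_symm_apply, Matrix.cons_val_zero, Matrix.cons_val_one, Matrix.cons_val_fin_one,
    PiLp.add_apply, PiLp.smul_apply, smul_eq_mul]
  · linear_combination -v 0 * h
  · linear_combination -v 1 * h

def normalSpeed (v₀ : ℝ) (u : Pt → Pt) (x : Pt) (θ : ℝ) : ℝ := dot (u x + v₀ • nhat θ) (nhat θ)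

def normalStrainRate (u : Pt → Pt) (x : Pt) (θ : ℝ) : ℝ :=
  dot (nhat θ) (mulVec2 (jacOf u x) (nhat θ))

theorem hasDerivAt_normalSpeed {v₀ : ℝ} {u : Pt → Pt} {r : ℝ → Pt} {θ : ℝ → ℝ} {t : ℝ}
    (hu : DifferentiableAt ℝ u (r t)) (hr : HasDerivAt r (u (r t) + v₀ • nhat (θ t)) t)
    (hθ : HasDerivAt θ (-(dot (nhat (θ t)) (mulVec2 (jacOf u (r t)) (ghat (θ t))))) t) :
    HasDerivAt (fun s => normalSpeed v₀ u (r s) (θ s))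
      (normalStrainRate u (r t) (θ t) * normalSpeed v₀ u (r t) (θ t)) t := by
  rw [mulVec2_jacOf] at hθ
  have hn := (hasDerivAt_nhat (θ t)).scomp t hθ
  have hV := (hu.hasFDerivAt.comp_hasDerivAt t hr).add (hn.const_smul v₀)
  refine (hV.dot hn).congr_deriv ?_
  have hLV : fderiv ℝ u (r t) (u (r t) + v₀ • nhat (θ t)) =
      dot (u (r t)) (ghat (θ t)) • fderiv ℝ u (r t) (ghat (θ t)) +
        normalSpeed v₀ u (r t) (θ t) • fderiv ℝ u (r t) (nhat (θ t)) := by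
    conv_lhs => rw [eq_dot_ghat_smul_add_dot_nhat_smul (u (r t) + v₀ • nhat (θ t)) (θ t)]
    simp [normalSpeed, dot_add_left, dot_smul_left, dot_nhat_ghat]
  simp only [hLV, normalStrainRate, normalSpeed, mulVec2_jacOf, Function.comp_apply, Pi.add_apply,
    Pi.smul_apply, dot_add_left, dot_smul_left, dot_smul_right, dot_ghat_nhat, dot_nhat_ghat]
  rw [dot_comm (fderiv ℝ u (r t) (ghat (θ t))), dot_comm (fderiv ℝ u (r t) (nhat (θ t)))]
  ring

theorem continuous_normalStrainRate {u : Pt → Pt} (hu : ContDiff ℝ 1 u) :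
    Continuous fun p : Pt × ℝ => normalStrainRate u p.1 p.2 := by
  simp only [normalStrainRate, mulVec2_jacOf, dot_eq_inner]
  have hn : Continuous fun p : Pt × ℝ => nhat p.2 := continuous_nhat.comp continuous_snd
  exact hn.inner (((hu.continuous_fderiv one_ne_zero).comp continuous_fst).clm_apply hn)

theorem sliding_is_invariant_general
    (v₀ : ℝ) (u : Pt → Pt) (hu : ContDiff ℝ 1 u)
    (a b : ℝ) (r : ℝ → Pt) (θ : ℝ → ℝ)
    (hr : ∀ t ∈ Set.Ioo a b, HasDerivAt r (u (r t) + v₀ • nhat (θ t)) t)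
    (hθ : ∀ t ∈ Set.Ioo a b,
      HasDerivAt θ (-(dot (nhat (θ t)) (mulVec2 (jacOf u (r t)) (ghat (θ t))))) t)
    (t₀ : ℝ) (ht₀ : t₀ ∈ Set.Ioo a b)
    (hslide₀ : dot (u (r t₀) + v₀ • nhat (θ t₀)) (nhat (θ t₀)) = 0) :
    ∀ t ∈ Set.Ioo a b, dot (u (r t) + v₀ • nhat (θ t)) (nhat (θ t)) = 0 := by
  have hrc : ContinuousOn r (Ioo a b) := fun t ht => (hr t ht).continuousAt.continuousWithinAt
  have hθc : ContinuousOn θ (Ioo a b) := fun t ht => (hθ t ht).continuousAt.continuousWithinAt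
  have hc : ContinuousOn (fun t => normalStrainRate u (r t) (θ t)) (Ioo a b) :=
    (continuous_normalStrainRate hu).comp_continuousOn (f := fun t => (r t, θ t)) (hrc.prodMk hθc)
  exact eqOn_zero_of_hasDerivAt_smul_self hc
    (fun t ht => hasDerivAt_normalSpeed (hu.differentiable one_ne_zero _) (hr t ht) (hθ t ht))
    ht₀ hslide₀

/-- Sliding is invariant along trajectories of the front-element
dynamics: if a solution is sliding at one time, it is sliding at every time. -/
theorem sliding_is_invariant
    (v₀ : ℝ) (hv₀ : 0 < v₀) (u : Pt → Pt) (hu : ContDiff ℝ 1 u)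
    (a b : ℝ) (r : ℝ → Pt) (θ : ℝ → ℝ)
    (hr : ∀ t ∈ Set.Ioo a b, HasDerivAt r (u (r t) + v₀ • nhat (θ t)) t)
    (hθ : ∀ t ∈ Set.Ioo a b,
      HasDerivAt θ (-(dot (nhat (θ t)) (mulVec2 (jacOf u (r t)) (ghat (θ t))))) t)
    (t₀ : ℝ) (ht₀ : t₀ ∈ Set.Ioo a b)
    (hslide₀ : dot (u (r t₀) + v₀ • nhat (θ t₀)) (nhat (θ t₀)) = 0) :
    ∀ t ∈ Set.Ioo a b, dot (u (r t) + v₀ • nhat (θ t)) (nhat (θ t)) = 0 :=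
  sliding_is_invariant_general v₀ u hu a b r θ hr hθ t₀ ht₀ hslide₀
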